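/- Let λ be a partition with at most N parts and T a column-strict tableau of shape λ given by the chain ∅ = λ^{(0)} ⊂ ⋯ ⊂ λ^{(N)} = λ, with θ_{i,k} := λ^{(k)}_i − λ^{(k−1)}_i. Work in the fraction field of ℚ(𝔱)[[q]], where f(u) := (𝔱u;q)_∞/(qu;q)_∞ is a well-defined unit for every u of the form q^m 𝔱^r with integers m, r ≥ 0. Then ∏_{k=1}^{N} ∏_{1≤i≤j≤k−1} [f(q^{λ^{(k−1)}_i−λ^{(k−1)}_j} 𝔱^{j−i}) · f(q^{λ^{(k)}_i−λ^{(k)}_{j+1}} 𝔱^{j−i})] / [f(q^{λ^{(k)}_i−λ^{(k−1)}_j} 𝔱^{j−i}) · f(q^{λ^{(k−1)}_i−λ^{(k)}_{j+1}} 𝔱^{j−i})] = ∏_{k=1}^{N} ∏_{1≤i≤j≤k−1} [(q^{−λ^{(k)}_i+λ^{(k−1)}_j+1} 𝔱^{i−j−1};q)_{θ_{i,k}} / (q^{−λ^{(k)}_i+λ^{(k−1)}_j} 𝔱^{i−j};q)_{θ_{i,k}}] · [(q^{−λ^{(k)}_i+λ^{(k)}_{j+1}} 𝔱^{i−j};q)_{θ_{i,k}}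 / (q^{−λ^{(k)}_i+λ^{(k)}_{j+1}+1} 𝔱^{i−j−1};q)_{θ_{i,k}}]; in other words, the Macdonald tableau coefficient ψ_T(q,𝔱) = ∏_{k=1}^N ψ_{λ^{(k)}/λ^{(k−1)}}(q,𝔱) admits this closed finite q-Pochhammer product expression. -/

import Mathlib

/-!
STATEMENT 9: the Macdonald tableau coefficient `ψ_T = ∏_k ψ_{λ⁽ᵏ⁾/λ⁽ᵏ⁻¹⁾}`,
written via `f(u) = (𝔱u;q)_∞/(qu;q)_∞`, equals the closed finite q-Pochhammer
product.  We work in the fraction field `F` of `ℚ(𝔱)[[q]]`; the infinite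
products `(a;q)_∞` are defined coefficientwise in `ℚ(𝔱)[[q]]`.
-/

noncomputable section
open Finset

/-- The q-Pochhammer symbol `(a;q)_n`. -/
def qPoch {K : Type*} [CommRing K] (a q : K) (n : ℕ) : K :=
  ∏ k ∈ Finset.range n, (1 - a * q ^ k)

/-- The infinite product `(a;q)_∞ = ∏_{k≥0}(1 − a q^k)` in `R[[q]]`, defined
coefficientwise (valid for `a` of nonnegative `q`-adic order). -/
def PochInf {K : Type*} [CommRing K] (a : PowerSeries K) : PowerSeries K :=
  PowerSeries.mk fun n =>
    PowerSeries.coeff n (∏ k ∈ Finset.range (n+1), (1 - a * (PowerSeries.X)^k))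

/-- `Λ` encodes a column-strict tableau of shape `lam`. -/
def IsTab (N : ℕ) (lam : ℕ → ℕ) (Λ : ℕ → ℕ → ℕ) : Prop :=
  (∀ k i, ¬(1 ≤ i ∧ i ≤ k ∧ k ≤ N) → Λ k i = 0) ∧
  (∀ i, 1 ≤ i → Λ N i = lam i) ∧
  (∀ k, 1 ≤ k → k ≤ N → ∀ i, 1 ≤ i → Λ (k-1) i ≤ Λ k i ∧ Λ k (i+1) ≤ Λ (k-1) i)

/-- `ℚ(𝔱)`. -/
abbrev Kt := RatFunc ℚ
/-- `𝔱`. -/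
def tv : Kt := RatFunc.X
/-- the fraction field of `ℚ(𝔱)[[q]]`. -/
abbrev F9 := FractionRing (PowerSeries Kt)

def ι : PowerSeries Kt →+* F9 := algebraMap (PowerSeries Kt) F9

/-- `q ∈ F`. -/
def qF : F9 := ι PowerSeries.X
/-- `𝔱 ∈ F`. -/
def tF : F9 := ι (PowerSeries.C tv)

/-- `f(q^m 𝔱^r) = (𝔱 q^m 𝔱^r;q)_∞ / (q q^m 𝔱^r;q)_∞ ∈ F`. -/
def fMac (m r : ℕ) : F9 :=
  ι (PochInf (PowerSeries.X ^ m * PowerSeries.C (tv ^ (r+1)))) /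
  ι (PochInf (PowerSeries.X ^ (m+1) * PowerSeries.C (tv ^ r)))

/-!
Telescoping the infinite product gives `(u;q)_∞ = (u;q)_θ · (q^θ u;q)_∞`, hence
`f(u) / f(q^θ u) = (𝔱u;q)_θ / (qu;q)_θ`, and each factor of `ψ_T` is a ratio of four finite
Pochhammer symbols `(c;q)_θ` with `c` a monomial of positive degree. Reversing the order of the
factors, `(q^{1-θ}/c;q)_θ = ∏_{k<θ} (-(c q^k)⁻¹) · (c;q)_θ`, so the right-hand side is the same
ratio times `((q/𝔱) · (𝔱/q))^θ = 1`.
-/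

open PowerSeries

section PochInf

variable {K : Type*} [CommRing K]

theorem coeff_mul_one_sub_mul_X_pow (p a : K⟦X⟧) {n m : ℕ} (h : n < m) :
    coeff n (p * (1 - a * X ^ m)) = coeff n p := by
  rw [mul_sub, mul_one, map_sub, ← mul_assoc, coeff_mul_X_pow', if_neg (by omega), sub_zero]

theorem coeff_prod_one_sub_mul_X_pow_of_lt (a : K⟦X⟧) {n m : ℕ} (h : n < m) :
    coeff n (∏ k ∈ range m, (1 - a * X ^ k)) =
      coeff n (∏ k ∈ range (n + 1), (1 - a * X ^ k)) := by
  induction m, h using Nat.le_induction with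
  | base => rfl
  | succ m hm ih => rw [prod_range_succ, coeff_mul_one_sub_mul_X_pow _ _ (by omega), ih]

theorem coeff_PochInf (a : K⟦X⟧) {n m : ℕ} (h : n < m) :
    coeff n (PochInf a) = coeff n (∏ k ∈ range m, (1 - a * X ^ k)) := by
  rw [coeff_prod_one_sub_mul_X_pow_of_lt a h, PochInf, coeff_mk]

theorem coeff_mul_eq_of_coeff_eq (u : K⟦X⟧) {v w : K⟦X⟧} {n : ℕ}
    (h : ∀ j ≤ n, coeff j v = coeff j w) : coeff n (u * v) = coeff n (u * w) := by
  rw [coeff_mul, coeff_mul]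
  refine sum_congr rfl fun p hp => ?_
  rw [h p.2 (by rw [HasAntidiagonal.mem_antidiagonal] at hp; omega)]

theorem PochInf_eq_one_sub_mul (a : K⟦X⟧) : PochInf a = (1 - a) * PochInf (a * X) := by
  ext n
  have hprod : ∏ k ∈ range (n + 2), (1 - a * X ^ k) =
      (1 - a) * ∏ k ∈ range (n + 1), (1 - a * X * X ^ k) := by
    rw [prod_range_succ', pow_zero, mul_one, mul_comm]
    simp only [pow_succ', mul_assoc]
  rw [coeff_PochInf a (by omega : n < n + 2), hprod]
  exact coeff_mul_eq_of_coeff_eq _ fun j hj => (coeff_PochInf _ (Nat.lt_succ_of_le hj)).symm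

theorem PochInf_eq_prod_mul (a : K⟦X⟧) (n : ℕ) :
    PochInf a = (∏ k ∈ range n, (1 - a * X ^ k)) * PochInf (a * X ^ n) := by
  induction n with
  | zero => simp
  | succ n ih =>
    rw [ih, PochInf_eq_one_sub_mul (a * X ^ n), prod_range_succ, mul_assoc, mul_assoc, ← pow_succ]

theorem constantCoeff_PochInf (a : K⟦X⟧) : constantCoeff (PochInf a) = 1 - constantCoeff a := by
  rw [← coeff_zero_eq_constantCoeff_apply, coeff_PochInf a zero_lt_one]
  simp

theorem PochInf_ne_zero {a : K⟦X⟧} (h : constantCoeff a ≠ 1) : PochInf a ≠ 0 := by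
  intro h0
  have h1 := constantCoeff_PochInf a
  rw [h0, map_zero, eq_comm, sub_eq_zero] at h1
  exact h h1.symm

end PochInf

theorem ι_injective : Function.Injective ι := IsFractionRing.injective _ _

theorem qF_ne_zero : qF ≠ 0 := (map_ne_zero_iff ι ι_injective).2 X_ne_zero

theorem tF_ne_zero : tF ≠ 0 :=
  (map_ne_zero_iff ι ι_injective).2 ((map_ne_zero_iff C C_injective).2 RatFunc.X_ne_zero)

theorem tv_pow_ne_one {s : ℕ} (hs : s ≠ 0) : tv ^ s ≠ 1 := by
  intro h
  have hX : (Polynomial.X ^ s : Polynomial ℚ) = 1 :=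
    RatFunc.algebraMap_injective ℚ (by simpa [tv, RatFunc.algebraMap_X] using h)
  simpa [hs] using congrArg Polynomial.natDegree hX

theorem ι_PochInf_ne_zero {m s : ℕ} (h : m ≠ 0 ∨ s ≠ 0) :
    ι (PochInf (X ^ m * C (tv ^ s))) ≠ 0 := by
  refine (map_ne_zero_iff ι ι_injective).2 (PochInf_ne_zero ?_)
  rcases h with hm | hs
  · simp [constantCoeff_X, zero_pow hm]
  · rcases eq_or_ne m 0 with rfl | hm
    · simpa using tv_pow_ne_one hs
    · simp [constantCoeff_X, zero_pow hm]

theorem ι_PochInf_eq_qPoch_mul (m s n : ℕ) :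
    ι (PochInf (X ^ m * C (tv ^ s))) =
      qPoch (qF ^ m * tF ^ s) qF n * ι (PochInf (X ^ (m + n) * C (tv ^ s))) := by
  rw [PochInf_eq_prod_mul _ n, map_mul, map_prod, qPoch, pow_add, mul_right_comm]
  congr 1
  refine prod_congr rfl fun k _ => ?_
  simp only [map_sub, map_one, map_mul, map_pow, qF, tF]

theorem fMac_div_fMac_add (m r n : ℕ) :
    fMac m r / fMac (m + n) r =
      qPoch (qF ^ m * tF ^ (r + 1)) qF n / qPoch (qF ^ (m + 1) * tF ^ r) qF n := by
  have hnum := ι_PochInf_ne_zero (m := m + n) (s := r + 1) (Or.inr r.succ_ne_zero)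
  have hden := ι_PochInf_ne_zero (m := m + n + 1) (s := r) (Or.inl (m + n).succ_ne_zero)
  rw [fMac, fMac, ι_PochInf_eq_qPoch_mul m (r + 1) n, ι_PochInf_eq_qPoch_mul (m + 1) r n,
    add_right_comm m 1 n, mul_div_mul_comm, mul_div_cancel_right₀ _ (div_ne_zero hnum hden)]

section Reflection

variable {K : Type*} [Field K] {q c d : K}

theorem qPoch_reflect (hq : q ≠ 0) (hc : c ≠ 0) (n : ℕ) :
    qPoch (q ^ (1 - (n : ℤ)) * c⁻¹) q n =
      (∏ k ∈ range n, -(c * q ^ k)⁻¹) * qPoch c q n := by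
  rw [qPoch, qPoch, ← prod_mul_distrib, ← prod_range_reflect _ n]
  refine prod_congr rfl fun k hk => ?_
  have hkn : k < n := mem_range.1 hk
  have hterm : q ^ (1 - (n : ℤ)) * c⁻¹ * q ^ (n - 1 - k) = (c * q ^ k)⁻¹ := by
    rw [← zpow_natCast, ← zpow_natCast, mul_inv, mul_right_comm, ← zpow_add₀ hq, ← zpow_neg,
      mul_comm]
    congr 2
    omega
  rw [hterm]
  field_simp
  ring

theorem qPoch_reflect_div (hq : q ≠ 0) (hc : c ≠ 0) (hd : d ≠ 0) (n : ℕ) :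
    qPoch (q ^ (1 - (n : ℤ)) * c⁻¹) q n / qPoch (q ^ (1 - (n : ℤ)) * d⁻¹) q n =
      (d / c) ^ n * (qPoch c q n / qPoch d q n) := by
  rw [qPoch_reflect hq hc, qPoch_reflect hq hd, mul_div_mul_comm, ← prod_div_distrib]
  congr 1
  rw [show (d / c) ^ n = ∏ _k ∈ range n, d / c by rw [prod_const, card_range]]
  refine prod_congr rfl fun k _ => ?_
  have hk : q ^ k ≠ 0 := pow_ne_zero k hq
  field_simp

end Reflection

/-- Stated with equations as hypotheses so that callers can discharge them by `omega`. -/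
theorem qF_zpow_mul_tF_zpow {e f : ℤ} {m s n : ℕ} (he : e = 1 - n - m) (hf : f = -s) :
    qF ^ e * tF ^ f = qF ^ (1 - (n : ℤ)) * (qF ^ m * tF ^ s)⁻¹ := by
  rw [he, hf, mul_inv, ← mul_assoc, ← zpow_natCast, ← zpow_natCast, ← zpow_neg, ← zpow_neg,
    ← zpow_add₀ qF_ne_zero, sub_eq_add_neg]

/-- With `λ = λ⁽ᵏ⁾`, `μ = λ⁽ᵏ⁻¹⁾`: `lamI = λ_i`, `muI = μ_i`, `muJ = μ_j`, `lamJ = λ_{j+1}`,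
`r = j - i`. -/
theorem fMac_cross_ratio_eq (lamI muI muJ lamJ r : ℕ) (hmu : muJ ≤ muI)
    (hstrip : muI ≤ lamI) (hlam : lamJ ≤ muI) :
    fMac (muI - muJ) r * fMac (lamI - lamJ) r / (fMac (lamI - muJ) r * fMac (muI - lamJ) r) =
      qPoch (qF ^ (-(lamI : ℤ) + muJ + 1) * tF ^ (-(r : ℤ) - 1)) qF (lamI - muI) /
        qPoch (qF ^ (-(lamI : ℤ) + muJ) * tF ^ (-(r : ℤ))) qF (lamI - muI) *
      (qPoch (qF ^ (-(lamI : ℤ) + lamJ) * tF ^ (-(r : ℤ))) qF (lamI - muI) /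
        qPoch (qF ^ (-(lamI : ℤ) + lamJ + 1) * tF ^ (-(r : ℤ) - 1)) qF (lamI - muI)) := by
  set θ := lamI - muI with hθ
  set a := muI - muJ with ha
  set b := muI - lamJ with hb
  have hc : ∀ m s : ℕ, qF ^ m * tF ^ s ≠ 0 := fun m s =>
    mul_ne_zero (pow_ne_zero m qF_ne_zero) (pow_ne_zero s tF_ne_zero)
  have hratio : qF ^ (a + 1) * tF ^ r / (qF ^ a * tF ^ (r + 1)) *
      (qF ^ b * tF ^ (r + 1) / (qF ^ (b + 1) * tF ^ r)) = 1 := by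
    field_simp [qF_ne_zero, tF_ne_zero]
    ring
  rw [show lamI - lamJ = b + θ by omega, show lamI - muJ = a + θ by omega, mul_div_mul_comm,
    ← inv_div (fMac b r), fMac_div_fMac_add, fMac_div_fMac_add,
    qF_zpow_mul_tF_zpow (m := a) (s := r + 1) (n := θ) (by omega) (by omega),
    qF_zpow_mul_tF_zpow (m := a + 1) (s := r) (n := θ) (by omega) (by omega),
    qF_zpow_mul_tF_zpow (m := b + 1) (s := r) (n := θ) (by omega) (by omega),
    qF_zpow_mul_tF_zpow (m := b) (s := r + 1) (n := θ) (by omega) (by omega),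
    qPoch_reflect_div qF_ne_zero (hc _ _) (hc _ _),
    qPoch_reflect_div qF_ne_zero (hc _ _) (hc _ _),
    mul_mul_mul_comm, ← mul_pow, hratio, one_pow, one_mul, inv_div]

theorem IsTab.antitone_prev {N : ℕ} {lam : ℕ → ℕ} {Λ : ℕ → ℕ → ℕ} (hT : IsTab N lam Λ)
    {k : ℕ} (hk : 1 ≤ k) (hkN : k ≤ N) {i j : ℕ} (hi : 1 ≤ i) (hij : i ≤ j) :
    Λ (k - 1) j ≤ Λ (k - 1) i := by
  induction j, hij using Nat.le_induction with
  | base => exact le_rfl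
  | succ j hij ih =>
    have hinter := hT.2.2 k hk hkN
    exact ((hinter (j + 1) (by omega)).1.trans (hinter j (by omega)).2).trans ih

theorem psi_closed_pochhammer_form_general (N : ℕ) (lam : ℕ → ℕ)
    (Λ : ℕ → ℕ → ℕ) (hT : IsTab N lam Λ) :
    (∀ m r : ℕ,
      ι (PochInf (PowerSeries.X ^ m * PowerSeries.C (tv ^ (r+1)))) ≠ 0 ∧
      ι (PochInf (PowerSeries.X ^ (m+1) * PowerSeries.C (tv ^ r))) ≠ 0) ∧
    (∏ k ∈ Finset.Icc 1 N, ∏ i ∈ Finset.Icc 1 (k-1), ∏ j ∈ Finset.Icc i (k-1),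
      (fMac (Λ (k-1) i - Λ (k-1) j) (j - i) * fMac (Λ k i - Λ k (j+1)) (j - i)) /
      (fMac (Λ k i - Λ (k-1) j) (j - i) * fMac (Λ (k-1) i - Λ k (j+1)) (j - i)))
    = ∏ k ∈ Finset.Icc 1 N, ∏ i ∈ Finset.Icc 1 (k-1), ∏ j ∈ Finset.Icc i (k-1),
      (qPoch (qF ^ (-(Λ k i : ℤ) + (Λ (k-1) j : ℤ) + 1) * tF ^ ((i:ℤ) - (j:ℤ) - 1)) qF
          (Λ k i - Λ (k-1) i) /
       qPoch (qF ^ (-(Λ k i : ℤ) + (Λ (k-1) j : ℤ)) * tF ^ ((i:ℤ) - (j:ℤ))) qF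
          (Λ k i - Λ (k-1) i)) *
      (qPoch (qF ^ (-(Λ k i : ℤ) + (Λ k (j+1) : ℤ)) * tF ^ ((i:ℤ) - (j:ℤ))) qF
          (Λ k i - Λ (k-1) i) /
       qPoch (qF ^ (-(Λ k i : ℤ) + (Λ k (j+1) : ℤ) + 1) * tF ^ ((i:ℤ) - (j:ℤ) - 1)) qF
          (Λ k i - Λ (k-1) i)) := by
  refine ⟨fun m r => ⟨ι_PochInf_ne_zero (Or.inr r.succ_ne_zero),
    ι_PochInf_ne_zero (Or.inl m.succ_ne_zero)⟩, ?_⟩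
  refine prod_congr rfl fun k hk => prod_congr rfl fun i hi => prod_congr rfl fun j hj => ?_
  rw [mem_Icc] at hk hi hj
  have hinter := hT.2.2 k hk.1 hk.2
  have hrow : Λ (k - 1) j ≤ Λ (k - 1) i := hT.antitone_prev hk.1 hk.2 hi.1 hj.1
  rw [show (i : ℤ) - j = -((j - i : ℕ) : ℤ) by omega]
  exact fMac_cross_ratio_eq _ _ _ _ _ hrow (hinter i hi.1).1
    ((hinter j (hi.1.trans hj.1)).2.trans hrow)

theorem psi_closed_pochhammer_form (N : ℕ) (lam : ℕ → ℕ)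
    (hpart : ∀ i, 1 ≤ i → lam (i+1) ≤ lam i) (hsupp : ∀ i, N < i → lam i = 0)
    (Λ : ℕ → ℕ → ℕ) (hT : IsTab N lam Λ) :
    (∀ m r : ℕ,
      ι (PochInf (PowerSeries.X ^ m * PowerSeries.C (tv ^ (r+1)))) ≠ 0 ∧
      ι (PochInf (PowerSeries.X ^ (m+1) * PowerSeries.C (tv ^ r))) ≠ 0) ∧
    (∏ k ∈ Finset.Icc 1 N, ∏ i ∈ Finset.Icc 1 (k-1), ∏ j ∈ Finset.Icc i (k-1),
      (fMac (Λ (k-1) i - Λ (k-1) j) (j - i) * fMac (Λ k i - Λ k (j+1)) (j - i)) /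
      (fMac (Λ k i - Λ (k-1) j) (j - i) * fMac (Λ (k-1) i - Λ k (j+1)) (j - i)))
    = ∏ k ∈ Finset.Icc 1 N, ∏ i ∈ Finset.Icc 1 (k-1), ∏ j ∈ Finset.Icc i (k-1),
      (qPoch (qF ^ (-(Λ k i : ℤ) + (Λ (k-1) j : ℤ) + 1) * tF ^ ((i:ℤ) - (j:ℤ) - 1)) qF
          (Λ k i - Λ (k-1) i) /
       qPoch (qF ^ (-(Λ k i : ℤ) + (Λ (k-1) j : ℤ)) * tF ^ ((i:ℤ) - (j:ℤ))) qF
          (Λ k i - Λ (k-1) i)) *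
      (qPoch (qF ^ (-(Λ k i : ℤ) + (Λ k (j+1) : ℤ)) * tF ^ ((i:ℤ) - (j:ℤ))) qF
          (Λ k i - Λ (k-1) i) /
       qPoch (qF ^ (-(Λ k i : ℤ) + (Λ k (j+1) : ℤ) + 1) * tF ^ ((i:ℤ) - (j:ℤ) - 1)) qF
          (Λ k i - Λ (k-1) i)) :=
  psi_closed_pochhammer_form_general N lam Λ hT
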